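/- Let $(\Xi,\mathcal{F},f)$ be a probability space, $S$ a measurable space, $A$ a nonempty set of actions, $\phi : S \times A \times \Xi \to S$ a transition function such that $\xi \mapsto \phi(s,a,\xi)$ is measurable for each $(s,a)$, $r : S \times A \to \mathbb{R}$ a bounded reward function, $\beta \neq 0$, $H \in \mathbb{N}$ a horizon, and $s_0 \in S$ an initial state. Define the value functions recursively by $V_{H+1}(s) := 0$ and $V_h(s) := \sup_{a \in A} \mathcal{U}_\beta^{f}[\xi \mapsto r(s,a) + V_{h+1}(\phi(s,a,\xi))]$ for $h = H, H-1, \dots, 0$, assuming that for each $(s,a,h)$ the map $\xi \mapsto V_{h+1}(\phi(s,a,\xi))$ is measurable (e.g., $A$ countable). For an action sequence $a_{0:H} \in A^{H+1}$ and noise sequence $\xi_{0:H} \in \Xi^{H+1}$, define the trajectory by $s_0' := s_0$, $s_{t+1}' := \phi(s_t', a_t, \xi_t)$, and the return $R(a_{0:H}, \xi_{0:H}) := \sum_{t=0}^{H} r(s_t', a_t)$; assume that for each fixed $a_{0:H}$ the map $\xi_{0:H} \mapsto R(a_{0:H},\xi_{0:H})$ is measurable with respect to the product $\sigma$-algebra.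 Then the straight-line-plan utility is a lower bound to the Bellman value: $V_0(s_0) \geq \sup_{a_{0:H} \in A^{H+1}} \mathcal{U}_\beta^{f^{\otimes(H+1)}}[R(a_{0:H}, \cdot)]$. -/

import Mathlib

open MeasureTheory

/-- The entropic utility `𝒰_β[X] = (1/β) log 𝔼[exp (β X)]` with respect to a
measure `P`. -/
noncomputable def entropicUtility {Ω : Type*} [MeasurableSpace Ω] (P : Measure Ω)
    (β : ℝ) (X : Ω → ℝ) : ℝ :=
  (1 / β) * Real.log (∫ ω, Real.exp (β * X ω) ∂P)

section Helpers

variable {Ω : Type*} [MeasurableSpace Ω] {P : Measure Ω}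

lemma integrable_of_bdd [IsFiniteMeasure P] {X : Ω → ℝ} (hX : Measurable X) {M : ℝ}
    (hM : ∀ ω, |X ω| ≤ M) : Integrable X P :=
  (integrable_const M).mono' hX.aestronglyMeasurable (ae_of_all _ fun ω => by
    simpa using hM ω)

lemma expInt_bounds [IsProbabilityMeasure P] {β M : ℝ} {X : Ω → ℝ} (hX : Measurable X)
    (hM : ∀ ω, |X ω| ≤ M) :
    Real.exp (-(|β| * M)) ≤ ∫ ω, Real.exp (β * X ω) ∂P ∧
      (∫ ω, Real.exp (β * X ω) ∂P) ≤ Real.exp (|β| * M) := by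
  have hmeas : Measurable fun ω => Real.exp (β * X ω) :=
    Real.measurable_exp.comp (hX.const_mul β)
  have habs : ∀ ω, |β * X ω| ≤ |β| * M := fun ω => by
    rw [abs_mul]; exact mul_le_mul_of_nonneg_left (hM ω) (abs_nonneg β)
  have hub : ∀ ω, Real.exp (β * X ω) ≤ Real.exp (|β| * M) := fun ω =>
    Real.exp_le_exp.2 (le_trans (le_abs_self _) (habs ω))
  have hlb : ∀ ω, Real.exp (-(|β| * M)) ≤ Real.exp (β * X ω) := fun ω =>
    Real.exp_le_exp.2 (le_trans (neg_le_neg (habs ω)) (neg_abs_le _))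
  have hb : ∀ ω, |Real.exp (β * X ω)| ≤ Real.exp (|β| * M) := fun ω => by
    rw [abs_of_pos (Real.exp_pos _)]; exact hub ω
  have hint : Integrable (fun ω => Real.exp (β * X ω)) P := integrable_of_bdd hmeas hb
  constructor
  · have := integral_mono (integrable_const (Real.exp (-(|β| * M)))) hint hlb
    simpa using this
  · have := integral_mono hint (integrable_const (Real.exp (|β| * M))) hub
    simpa using this

lemma entropicUtility_abs_le [IsProbabilityMeasure P] {β M : ℝ} (hβ : β ≠ 0) {X : Ω → ℝ}
    (hX : Measurable X) (hM : ∀ ω, |X ω| ≤ M) : |entropicUtility P β X| ≤ M := by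
  obtain ⟨h1, h2⟩ := expInt_bounds (P := P) (β := β) hX hM
  have hpos : (0:ℝ) < ∫ ω, Real.exp (β * X ω) ∂P := lt_of_lt_of_le (Real.exp_pos _) h1
  haveI : Nonempty Ω := Measure.nonempty_of_neZero P
  have hM0 : 0 ≤ M := le_trans (abs_nonneg _) (hM (Classical.ofNonempty))
  have hlog1 : Real.log (∫ ω, Real.exp (β * X ω) ∂P) ≤ |β| * M :=
    (Real.log_le_iff_le_exp hpos).2 h2
  have hlog2 : -(|β| * M) ≤ Real.log (∫ ω, Real.exp (β * X ω) ∂P) := by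
    rw [← Real.log_exp (-(|β| * M))]
    exact Real.log_le_log (Real.exp_pos _) h1
  have habsL : |Real.log (∫ ω, Real.exp (β * X ω) ∂P)| ≤ |β| * M :=
    abs_le.2 ⟨hlog2, hlog1⟩
  have hβpos : (0:ℝ) < |β| := abs_pos.2 hβ
  rw [entropicUtility, abs_mul, abs_div, abs_one]
  calc 1 / |β| * |Real.log (∫ ω, Real.exp (β * X ω) ∂P)|
      ≤ 1 / |β| * (|β| * M) :=
        mul_le_mul_of_nonneg_left habsL (by positivity)
    _ = M := by field_simp

lemma util_compare {β I J : ℝ} (hβ : β ≠ 0) (hI : 0 < I) (hJ : 0 < J)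
    (h1 : 0 < β → I ≤ J) (h2 : β < 0 → J ≤ I) :
    (1 / β) * Real.log I ≤ (1 / β) * Real.log J := by
  rcases lt_or_gt_of_ne hβ with hneg | hpos
  · have hlog : Real.log J ≤ Real.log I := Real.log_le_log hJ (h2 hneg)
    have hb : (1 / β) ≤ 0 := le_of_lt (one_div_neg.2 hneg)
    exact mul_le_mul_of_nonpos_left hlog hb
  · have hlog : Real.log I ≤ Real.log J := Real.log_le_log hI (h1 hpos)
    exact mul_le_mul_of_nonneg_left hlog (le_of_lt (one_div_pos.2 hpos))

lemma util_to_exp {β u I : ℝ} (hβ : β ≠ 0) (hI : 0 < I) (h : (1 / β) * Real.log I ≤ u) :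
    (0 < β → I ≤ Real.exp (β * u)) ∧ (β < 0 → Real.exp (β * u) ≤ I) := by
  constructor
  · intro hb
    have hlog : Real.log I ≤ β * u := by
      have := mul_le_mul_of_nonneg_left h (le_of_lt hb)
      rwa [← mul_assoc, mul_one_div, div_self hβ, one_mul] at this
    calc I = Real.exp (Real.log I) := (Real.exp_log hI).symm
      _ ≤ _ := Real.exp_le_exp.2 hlog
  · intro hb
    have hlog : β * u ≤ Real.log I := by
      have := mul_le_mul_of_nonpos_left h (le_of_lt hb)
      rwa [← mul_assoc, mul_one_div, div_self hβ, one_mul] at this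
    calc Real.exp (β * u) ≤ Real.exp (Real.log I) := Real.exp_le_exp.2 hlog
      _ = I := Real.exp_log hI

end Helpers

section Ret
variable {Ξ S A : Type*}

/-- Return of a straight-line plan over `k` remaining steps, starting from `s`. -/
def retAux (φ : S → A → Ξ → S) (r : S → A → ℝ) : (k : ℕ) → S → (ℕ → A) → (Fin k → Ξ) → ℝ
  | 0, _, _, _ => 0
  | k + 1, s, b, ξ =>
      r s (b 0) + retAux φ r k (φ s (b 0) (ξ 0)) (fun n => b (n + 1)) (Fin.tail ξ)

lemma retAux_abs_le (φ : S → A → Ξ → S) (r : S → A → ℝ) {C : ℝ} (hr : ∀ s a, |r s a| ≤ C) :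
    ∀ (k : ℕ) (s : S) (b : ℕ → A) (ξ : Fin k → Ξ), |retAux φ r k s b ξ| ≤ k * C := by
  intro k
  induction k with
  | zero => intro s b ξ; simp [retAux]
  | succ k ih =>
    intro s b ξ
    calc |retAux φ r (k+1) s b ξ|
        ≤ |r s (b 0)| + |retAux φ r k (φ s (b 0) (ξ 0)) (fun n => b (n+1)) (Fin.tail ξ)| := by
          rw [retAux]; exact abs_add_le _ _
      _ ≤ C + k * C := add_le_add (hr _ _) (ih _ _ _)
      _ = (k + 1 : ℕ) * C := by push_cast; ring

lemma retAux_eq_sum (φ : S → A → Ξ → S) (r : S → A → ℝ) :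
    ∀ (k : ℕ) (s : S) (b : ℕ → A) (ξ : Fin k → Ξ) (σ : ℕ → S), σ 0 = s →
      (∀ t : Fin k, σ (t + 1) = φ (σ t) (b t) (ξ t)) →
      retAux φ r k s b ξ = ∑ t : Fin k, r (σ t) (b t) := by
  intro k
  induction k with
  | zero => intro s b ξ σ h0 hS; simp [retAux]
  | succ k ih =>
    intro s b ξ σ h0 hS
    have h1 : σ 1 = φ s (b 0) (ξ 0) := by
      have := hS 0
      simpa [h0] using this
    have hS' : ∀ t : Fin k, σ (↑t + 1 + 1) = φ (σ (↑t + 1)) (b (↑t + 1)) (Fin.tail ξ t) := by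
      intro t
      have := hS t.succ
      simpa [Fin.tail, Fin.val_succ] using this
    have hrec := ih (φ s (b 0) (ξ 0)) (fun n => b (n+1)) (Fin.tail ξ) (fun n => σ (n+1))
      (by simpa using h1) hS'
    rw [retAux, hrec, Fin.sum_univ_succ]
    simp [h0, Fin.val_succ]

end Ret


/-- The straight-line-plan utility is a lower bound to the optimal (Bellman)
entropic utility: `V 0 s0 ≥ sup_{a_{0:H}} 𝒰_β^{f^{⊗(H+1)}}[R(a_{0:H}, ·)]`. -/
theorem slp_utility_le_bellman_value
    {Ξ : Type*} [MeasurableSpace Ξ] (f : Measure Ξ) [IsProbabilityMeasure f]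
    {S : Type*} [MeasurableSpace S] {A : Type*} [Nonempty A]
    (φ : S → A → Ξ → S) (hφ : ∀ s a, Measurable (fun ξ => φ s a ξ))
    (r : S → A → ℝ) (C : ℝ) (hr : ∀ s a, |r s a| ≤ C)
    (β : ℝ) (hβ : β ≠ 0) (H : ℕ) (s0 : S)
    -- the Bellman value functions, defined by backward recursion
    (V : ℕ → S → ℝ)
    (hVend : ∀ s, V (H + 1) s = 0)
    (hVrec : ∀ h, h ≤ H → ∀ s, V h s =
      ⨆ a : A, entropicUtility f β (fun ξ => r s a + V (h + 1) (φ s a ξ)))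
    (hVmeas : ∀ s a h, Measurable (fun ξ => V (h + 1) (φ s a ξ)))
    -- the state trajectory induced by an action sequence and a noise scenario
    (traj : (Fin (H + 1) → A) → (Fin (H + 1) → Ξ) → ℕ → S)
    (htraj0 : ∀ a ξ, traj a ξ 0 = s0)
    (htrajS : ∀ a ξ (t : Fin (H + 1)), traj a ξ (t + 1) = φ (traj a ξ t) (a t) (ξ t))
    -- the return of an action sequence under a noise scenario
    (R : (Fin (H + 1) → A) → (Fin (H + 1) → Ξ) → ℝ)
    (hR : ∀ a ξ, R a ξ = ∑ t : Fin (H + 1), r (traj a ξ t) (a t))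
    (hRmeas : ∀ a, Measurable (R a)) :
    V 0 s0 ≥ ⨆ a : Fin (H + 1) → A,
      entropicUtility (Measure.pi fun _ : Fin (H + 1) => f) β (R a) := by
  -- bound on the value functions
  have Vbound : ∀ (j h' : ℕ), h' + j = H + 1 → ∀ s, |V h' s| ≤ j * C := by
    intro j
    induction j with
    | zero =>
      intro h' hh s
      obtain rfl : h' = H + 1 := by omega
      rw [hVend]; simp
    | succ j ih =>
      intro h' hh s
      have hh' : h' ≤ H := by omega
      have hbd : ∀ a : A,
          |entropicUtility f β (fun ξ => r s a + V (h' + 1) (φ s a ξ))| ≤ (↑(j+1)) * C := by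
        intro a
        refine entropicUtility_abs_le hβ ((hVmeas s a h').const_add (r s a)) fun ξ => ?_
        calc |r s a + V (h'+1) (φ s a ξ)|
            ≤ |r s a| + |V (h'+1) (φ s a ξ)| := abs_add_le _ _
          _ ≤ C + j * C := add_le_add (hr s a) (ih (h'+1) (by omega) _)
          _ = (↑(j+1)) * C := by push_cast; ring
      rw [hVrec h' hh']
      have hbdd : BddAbove (Set.range fun a : A =>
          entropicUtility f β (fun ξ => r s a + V (h'+1) (φ s a ξ))) :=
        ⟨(↑(j+1)) * C, Set.forall_mem_range.2 fun a => (abs_le.1 (hbd a)).2⟩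
      refine abs_le.2 ⟨?_, ciSup_le fun a => (abs_le.1 (hbd a)).2⟩
      obtain ⟨a0⟩ := ‹Nonempty A›
      exact le_trans (abs_le.1 (hbd a0)).1 (le_ciSup hbdd a0)
  -- the key induction
  have key : ∀ (k h : ℕ), h + k = H + 1 → ∀ (s : S) (b : ℕ → A)
      (g : (Fin k → Ξ) → ℝ), Measurable g → (∀ ξ, g ξ = retAux φ r k s b ξ) →
      entropicUtility (Measure.pi fun _ : Fin k => f) β g ≤ V h s := by
    intro k
    induction k with
    | zero =>
      intro h hh s b g hgm hgr
      obtain rfl : h = H + 1 := by omega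
      rw [hVend]
      have hg0 : ∀ ξ, g ξ = 0 := fun ξ => by rw [hgr]; rfl
      rw [entropicUtility]
      simp [hg0]
    | succ k ih =>
      intro h hh s b g hgm hgr
      have hh' : h ≤ H := by omega
      set a0 : A := b 0 with ha0
      set b' : ℕ → A := fun n => b (n + 1) with hb'
      set μk : Measure (Fin k → Ξ) := Measure.pi fun _ => f with hμk
      set e := MeasurableEquiv.piFinSuccAbove (fun _ : Fin (k+1) => Ξ) 0 with he
      have hesymm : ∀ (x : Ξ) (y : Fin k → Ξ), e.symm (x, y) = Fin.cons x y := by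
        intro x y
        simp [he, MeasurableEquiv.piFinSuccAbove, MeasurableEquiv.symm,
          Fin.insertNthEquiv_zero, Fin.consEquiv]
      have hsymm : ∀ (x : Ξ) (y : Fin k → Ξ),
          g (e.symm (x, y)) = r s a0 + retAux φ r k (φ s a0 x) b' y := by
        intro x y
        rw [hesymm, hgr, retAux]
        simp [Fin.tail_cons, ha0, hb']
      -- section measurability
      have hsec : ∀ x : Ξ, Measurable fun y => retAux φ r k (φ s a0 x) b' y := by
        intro x
        have hEq : (fun y : Fin k → Ξ => retAux φ r k (φ s a0 x) b' y)
            = fun y => g (e.symm (x, y)) - r s a0 := funext fun y => by rw [hsymm x y]; ring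
        rw [hEq]
        exact (hgm.comp (e.symm.measurable.comp measurable_prodMk_left)).sub measurable_const
      -- bounds
      have hC0 : 0 ≤ C := le_trans (abs_nonneg _) (hr s a0)
      set M : ℝ := ((k:ℝ) + 1) * C with hM
      have hgb : ∀ ξ, |g ξ| ≤ M := fun ξ => by
        rw [hgr]
        have := retAux_abs_le φ r hr (k+1) s b ξ
        push_cast at this ⊢
        linarith
      -- the integrand on the product space
      set F : Ξ × (Fin k → Ξ) → ℝ := fun p => Real.exp (β * g (e.symm p)) with hF
      have hFm : Measurable F :=
        Real.measurable_exp.comp ((hgm.comp e.symm.measurable).const_mul β)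
      have hFb : ∀ p, |F p| ≤ Real.exp (|β| * M) := by
        intro p
        rw [hF, abs_of_pos (Real.exp_pos _)]
        refine Real.exp_le_exp.2 (le_trans (le_abs_self _) ?_)
        rw [abs_mul]
        exact mul_le_mul_of_nonneg_left (hgb _) (abs_nonneg β)
      have hFint : Integrable F (f.prod μk) := integrable_of_bdd hFm hFb
      -- Fubini
      have hmp : MeasurePreserving e.symm (f.prod μk) (Measure.pi fun _ : Fin (k+1) => f) :=
        (measurePreserving_piFinSuccAbove (fun _ : Fin (k+1) => f) 0).symm
      have hIeq : ∫ ξ, Real.exp (β * g ξ) ∂(Measure.pi fun _ : Fin (k+1) => f)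
          = ∫ p, F p ∂(f.prod μk) :=
        (hmp.integral_comp e.symm.measurableEmbedding fun ξ => Real.exp (β * g ξ)).symm
      have hFub : ∫ p, F p ∂(f.prod μk) = ∫ x, ∫ y, F (x, y) ∂μk ∂f := integral_prod F hFint
      set Ix : Ξ → ℝ := fun x => ∫ y, F (x, y) ∂μk with hIxdef
      have hIxm : Measurable Ix := by
        have := hFm.stronglyMeasurable.integral_prod_right' (ν := μk)
        exact this.measurable
      -- rewrite the inner integral
      have hIx2 : ∀ x, Ix x
          = ∫ y, Real.exp (β * (r s a0 + retAux φ r k (φ s a0 x) b' y)) ∂μk := fun x =>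
        integral_congr_ae (ae_of_all _ fun y => by simp only [hF]; rw [hsymm x y])
      have hinner : ∀ x : Ξ, Real.exp (-(|β| * M)) ≤ Ix x ∧ Ix x ≤ Real.exp (|β| * M) := by
        intro x
        rw [hIx2 x]
        refine expInt_bounds ((hsec x).const_add (r s a0)) fun y => ?_
        calc |r s a0 + retAux φ r k (φ s a0 x) b' y|
            ≤ |r s a0| + |retAux φ r k (φ s a0 x) b' y| := abs_add_le _ _
          _ ≤ C + (k:ℝ) * C := add_le_add (hr s a0) (retAux_abs_le φ r hr k _ _ _)
          _ = M := by rw [hM]; ring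
      have hIxpos : ∀ x, 0 < Ix x := fun x =>
        lt_of_lt_of_le (Real.exp_pos _) (hinner x).1
      have hIxint : Integrable Ix f := integrable_of_bdd (M := Real.exp (|β| * M)) hIxm fun x => by
        rw [abs_of_pos (hIxpos x)]; exact (hinner x).2
      -- the comparison function
      set G : Ξ → ℝ := fun x => Real.exp (β * (r s a0 + V (h+1) (φ s a0 x))) with hG
      set MV : ℝ := C + ((H - h : ℕ) : ℝ) * C with hMV
      have hXm : Measurable fun x => r s a0 + V (h+1) (φ s a0 x) :=
        (hVmeas s a0 h).const_add (r s a0)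
      have hXb : ∀ x, |r s a0 + V (h+1) (φ s a0 x)| ≤ MV := fun x => by
        calc |r s a0 + V (h+1) (φ s a0 x)|
            ≤ |r s a0| + |V (h+1) (φ s a0 x)| := abs_add_le _ _
          _ ≤ C + ((H - h : ℕ) : ℝ) * C :=
              add_le_add (hr s a0) (Vbound (H - h) (h+1) (by omega) _)
          _ = MV := by rw [hMV]
      have hGbds := expInt_bounds (P := f) (β := β) hXm hXb
      have hGm : Measurable G := Real.measurable_exp.comp (hXm.const_mul β)
      have hGint : Integrable G f := integrable_of_bdd (M := Real.exp (|β| * MV)) hGm fun x => by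
        rw [hG, abs_of_pos (Real.exp_pos _)]
        refine Real.exp_le_exp.2 (le_trans (le_abs_self _) ?_)
        rw [abs_mul]
        exact mul_le_mul_of_nonneg_left (hXb x) (abs_nonneg β)
      -- pointwise comparison via the induction hypothesis
      have hcmp : ∀ x : Ξ, (0 < β → Ix x ≤ G x) ∧ (β < 0 → G x ≤ Ix x) := by
        intro x
        have hIH : entropicUtility μk β (fun y => retAux φ r k (φ s a0 x) b' y)
            ≤ V (h+1) (φ s a0 x) :=
          ih (h+1) (by omega) (φ s a0 x) b' _ (hsec x) (fun y => rfl)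
        have hIypos : 0 < ∫ y, Real.exp (β * retAux φ r k (φ s a0 x) b' y) ∂μk := by
          have := (expInt_bounds (P := μk) (β := β) (hsec x)
            (fun y => retAux_abs_le φ r hr k _ _ _)).1
          exact lt_of_lt_of_le (Real.exp_pos _) this
        have hexp := util_to_exp hβ hIypos hIH
        have hIxfac : Ix x = Real.exp (β * r s a0)
            * ∫ y, Real.exp (β * retAux φ r k (φ s a0 x) b' y) ∂μk := by
          rw [hIx2 x, ← integral_const_mul]
          refine integral_congr_ae (ae_of_all _ fun y => ?_)
          simp only [mul_add, Real.exp_add]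
        have hGfac : G x = Real.exp (β * r s a0)
            * Real.exp (β * V (h+1) (φ s a0 x)) := by
          simp only [hG, mul_add, Real.exp_add]
        constructor
        · intro hb
          rw [hIxfac, hGfac]
          exact mul_le_mul_of_nonneg_left (hexp.1 hb) (le_of_lt (Real.exp_pos _))
        · intro hb
          rw [hIxfac, hGfac]
          exact mul_le_mul_of_nonneg_left (hexp.2 hb) (le_of_lt (Real.exp_pos _))
      -- assemble
      have hItotpos : 0 < ∫ x, Ix x ∂f := by
        have hlb := integral_mono (integrable_const (Real.exp (-(|β| * M)))) hIxint
          (fun x => (hinner x).1)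
        simp only [integral_const, measure_univ, ENNReal.toReal_one, probReal_univ, smul_eq_mul,
          one_mul] at hlb
        exact lt_of_lt_of_le (Real.exp_pos _) hlb
      have hJpos : 0 < ∫ x, G x ∂f :=
        lt_of_lt_of_le (Real.exp_pos _) hGbds.1
      have hstep : entropicUtility (Measure.pi fun _ : Fin (k+1) => f) β g
          ≤ entropicUtility f β (fun x => r s a0 + V (h+1) (φ s a0 x)) := by
        rw [entropicUtility, entropicUtility, hIeq, hFub]
        exact util_compare hβ hItotpos hJpos
          (fun hb => integral_mono hIxint hGint fun x => (hcmp x).1 hb)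
          (fun hb => integral_mono hGint hIxint fun x => (hcmp x).2 hb)
      refine le_trans hstep ?_
      rw [hVrec h hh']
      have hbd : ∀ a : A,
          |entropicUtility f β (fun ξ => r s a + V (h + 1) (φ s a ξ))| ≤ C + ((H - h : ℕ) : ℝ) * C := by
        intro a
        refine entropicUtility_abs_le hβ ((hVmeas s a h).const_add (r s a)) fun ξ => ?_
        calc |r s a + V (h+1) (φ s a ξ)|
            ≤ |r s a| + |V (h+1) (φ s a ξ)| := abs_add_le _ _
          _ ≤ C + ((H - h : ℕ) : ℝ) * C :=
              add_le_add (hr s a) (Vbound (H - h) (h+1) (by omega) _)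
      have hbdd : BddAbove (Set.range fun a : A =>
          entropicUtility f β (fun ξ => r s a + V (h+1) (φ s a ξ))) :=
        ⟨C + ((H - h : ℕ) : ℝ) * C, Set.forall_mem_range.2 fun a => (abs_le.1 (hbd a)).2⟩
      exact le_ciSup hbdd a0
  -- conclude
  refine ciSup_le fun a => ?_
  set b : ℕ → A := fun n => a ⟨min n H, by omega⟩ with hb
  have hba : ∀ t : Fin (H + 1), b ↑t = a t := by
    intro t
    have ht : min (↑t : ℕ) H = ↑t := min_eq_left (Nat.lt_succ_iff.1 t.isLt)
    simp only [hb]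
    congr 1
    exact Fin.ext ht
  refine key (H+1) 0 (by omega) s0 b (R a) (hRmeas a) fun ξ => ?_
  have hσ : ∀ t : Fin (H + 1), traj a ξ (↑t + 1) = φ (traj a ξ ↑t) (b ↑t) (ξ t) := by
    intro t
    rw [hba t]
    exact htrajS a ξ t
  have := retAux_eq_sum φ r (H+1) s0 b ξ (traj a ξ) (htraj0 a ξ) hσ
  rw [hR, this]
  exact Finset.sum_congr rfl fun t _ => by rw [hba t]
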